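/- Let E be an n×n matrix of nonnegative integers with det E ≠ 0, let I ⊆ {1,…,n}, let A = {i : E_{ij} = 0 for all j ∉ I}, and suppose |A| = |I|. Let G_E = {λ ∈ (ℂ*)^n : ∏_j λ_j^{E_{ij}} = 1 for all i}, and let G_E^I be the subgroup of G_E consisting of the elements λ with λ_j = 1 for all j ∈ I. Then the restriction map λ ↦ (λ_j)_{j ∈ Iᶜ} is a group isomorphism from G_E^I onto the group {ν ∈ (ℂ*)^{Iᶜ} : ∏_{j ∈ Iᶜ} ν_j^{E_{ij}} = 1 for all i ∈ Aᶜ}, and in particular |G_E^I| = |det E[Aᶜ, Iᶜ]|, the absolute value of the determinant of the submatrix of E with rows in Aᶜ and columns in Iᶜ. -/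

import Mathlib

open Finset

variable {n : ℕ}

/-- The diagonal symmetry group `G_E` of the invertible polynomial
`f(x) = ∑ i, ∏ j, x_j ^ E i j`, realized as the subgroup of `(ℂ*)^n` of
diagonal transformations `λ` with `∏ j, λ_j ^ E i j = 1` for all `i`. -/
def symGroup (E : Matrix (Fin n) (Fin n) ℕ) : Subgroup (Fin n → ℂˣ) where
  carrier := {l | ∀ i, ∏ j, l j ^ E i j = 1}
  one_mem' := by intro i; simp
  mul_mem' := by
    intro a b ha hb i
    simp only [Pi.mul_apply, mul_pow, Finset.prod_mul_distrib, ha i, hb i, mul_one]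
  inv_mem' := by
    intro a ha i
    simp only [Pi.inv_apply, inv_pow, Finset.prod_inv_distrib, ha i, inv_one]


/-- For a subset `I ⊆ {1,…,n}` of columns, `rowSet E I = A(I)` is the set of rows of `E`
supported in the columns `I`, i.e. `{i : E i j = 0 for all j ∉ I}`. -/
def rowSet (E : Matrix (Fin n) (Fin n) ℕ) (I : Finset (Fin n)) : Finset (Fin n) :=
  @Finset.filter _ (fun i => ∀ j, j ∉ I → E i j = 0) (fun _ => inferInstance) Finset.univ

/-- The subgroup of `(ℂ*)^n` of elements `λ` with `λ_j = 1` for all `j ∈ I`. -/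
def fixedSub (I : Finset (Fin n)) : Subgroup (Fin n → ℂˣ) where
  carrier := {l | ∀ j ∈ I, l j = 1}
  one_mem' := by intro j hj; rfl
  mul_mem' := by intro a b ha hb j hj; simp [Pi.mul_apply, ha j hj, hb j hj]
  inv_mem' := by intro a ha j hj; simp [Pi.inv_apply, ha j hj]

/-- The isotropy subgroup `G_E^I = {λ ∈ G_E : λ_j = 1 for all j ∈ I}` of the points of
the coordinate torus `(ℂ*)^{Iᶜ}` under the diagonal `G_E`-action. -/
def isotropy (E : Matrix (Fin n) (Fin n) ℕ) (I : Finset (Fin n)) :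
    Subgroup (Fin n → ℂˣ) :=
  symGroup E ⊓ fixedSub I

/-- The restriction map `λ ↦ (λ_j)_{j ∈ Iᶜ}` from `G_E^I` to `(ℂ*)^{Iᶜ}`. -/
def restrictTorus (E : Matrix (Fin n) (Fin n) ℕ) (I : Finset (Fin n)) :
    ↥(isotropy E I) →* (↥(Iᶜ) → ℂˣ) where
  toFun l := fun j => (l : Fin n → ℂˣ) (j : Fin n)
  map_one' := rfl
  map_mul' := fun _ _ => rfl

/-- The subgroup `{ν ∈ (ℂ*)^{Iᶜ} : ∏_{j ∈ Iᶜ} ν_j ^ E i j = 1 for all i ∈ Aᶜ}`,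
where `A = rowSet E I`. -/
def torusSym (E : Matrix (Fin n) (Fin n) ℕ) (I : Finset (Fin n)) :
    Subgroup (↥(Iᶜ) → ℂˣ) where
  carrier := {v | ∀ i ∈ (rowSet E I)ᶜ, ∏ j : ↥(Iᶜ), v j ^ E i (j : Fin n) = 1}
  one_mem' := by intro i _; simp
  mul_mem' := by
    intro a b ha hb i hi
    simp only [Pi.mul_apply, mul_pow, Finset.prod_mul_distrib, ha i hi, hb i hi, mul_one]
  inv_mem' := by
    intro a ha i hi
    simp only [Pi.inv_apply, inv_pow, Finset.prod_inv_distrib, ha i hi, inv_one]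

open scoped Matrix

theorem card_charKer {ι : Type*} [Fintype ι] [DecidableEq ι]
    (M : Matrix ι ι ℤ) (hdet : M.det ≠ 0) :
    Nat.card {ν : ι → ℂˣ // ∀ i, ∏ j, ν j ^ M i j = 1} = M.det.natAbs := by
  classical
  set C := Additive ℂˣ with hC
  set L : (ι → ℤ) →ₗ[ℤ] (ι → ℤ) := M.transpose.mulVecLin with hLdef
  have hLapp : ∀ x, L x = M.transpose *ᵥ x := fun x => rfl
  have hinj : Function.Injective L := by
    rw [← LinearMap.ker_eq_bot, LinearMap.ker_eq_bot']
    intro v hv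
    have h0 : M.transpose *ᵥ v = 0 := hv
    have h1 : M.transpose.adjugate *ᵥ (M.transpose *ᵥ v) = 0 := by rw [h0, Matrix.mulVec_zero]
    rw [Matrix.mulVec_mulVec, Matrix.adjugate_mul, Matrix.smul_mulVec,
      Matrix.one_mulVec] at h1
    funext j
    have := congrFun h1 j
    simp only [Pi.smul_apply, smul_eq_mul, Pi.zero_apply, Matrix.det_transpose,
      mul_eq_zero] at this
    exact this.resolve_left hdet
  set N : Submodule ℤ (ι → ℤ) := LinearMap.range L with hNdef
  set Q := (ι → ℤ) ⧸ N with hQdef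
  -- the rows of M generate N
  have hLsingle : ∀ i, L (Pi.single i 1) = M i := by
    intro i
    funext j
    simp [hLapp, Matrix.mulVec_single, Matrix.transpose_apply]
  have hLsum : ∀ x : ι → ℤ, L x = ∑ i, x i • M i := by
    intro x
    funext j
    simp only [hLapp, Matrix.mulVec, dotProduct, Matrix.transpose_apply,
      Finset.sum_apply, Pi.smul_apply, smul_eq_mul]
    exact Finset.sum_congr rfl fun i _ => mul_comm _ _
  set cstr : (ι → C) ≃ₗ[ℕ] ((ι → ℤ) →ₗ[ℤ] C) := (Pi.basisFun ℤ ι).constr ℕ with hcstr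
  have hφ : ∀ (g : ι → C) (x : ι → ℤ), cstr g x = ∑ j, x j • g j := by
    intro g x
    rw [hcstr, Module.Basis.constr_apply_fintype]
    simp [Pi.basisFun_equivFun]
  have hkey : ∀ (a : ι → ℂˣ) (i), cstr (fun j => Additive.ofMul (a j)) (M i)
      = Additive.ofMul (∏ j, a j ^ M i j) := by
    intro a i
    rw [hφ, ofMul_prod]
    exact Finset.sum_congr rfl fun j _ => (ofMul_zpow _ _).symm
  have eq1 : {ν : ι → ℂˣ // ∀ i, ∏ j, ν j ^ M i j = 1}
      ≃ {φ : (ι → ℤ) →ₗ[ℤ] C // N ≤ LinearMap.ker φ} := by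
    refine ((Equiv.piCongrRight fun _ => Additive.ofMul).trans cstr.toEquiv).subtypeEquiv
      fun a => ?_
    have hcoe : (((Equiv.piCongrRight fun _ : ι => Additive.ofMul).trans cstr.toEquiv) a)
        = cstr (fun j => Additive.ofMul (a j)) := rfl
    have hmem : N ≤ LinearMap.ker (cstr fun j => Additive.ofMul (a j))
        ↔ ∀ i, cstr (fun j => Additive.ofMul (a j)) (M i) = 0 := by
      constructor
      · intro h i
        exact h ⟨Pi.single i 1, hLsingle i⟩
      · intro h x hx
        obtain ⟨y, rfl⟩ := hx
        rw [LinearMap.mem_ker, hLsum, map_sum]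
        simp only [map_smul]
        refine Finset.sum_eq_zero fun i _ => by rw [h i, smul_zero]
    rw [hcoe, hmem]
    refine forall_congr' fun i => ?_
    rw [hkey]
    constructor
    · intro h; rw [h]; rfl
    · intro h
      have := congrArg Additive.toMul h
      simpa using this
  have eq2 : {φ : (ι → ℤ) →ₗ[ℤ] C // N ≤ LinearMap.ker φ} ≃ (Q →ₗ[ℤ] C) :=
    { toFun := fun φ => N.liftQ φ.1 φ.2
      invFun := fun ψ => ⟨ψ.comp N.mkQ, fun x hx => LinearMap.mem_ker.mpr (by
        rw [LinearMap.comp_apply, Submodule.mkQ_apply,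
          (Submodule.Quotient.mk_eq_zero N).mpr hx, map_zero])⟩
      left_inv := fun φ => Subtype.ext (Submodule.liftQ_mkQ _ _ _)
      right_inv := fun ψ => Submodule.linearMap_qext _ rfl }
  have eq3 : (Q →ₗ[ℤ] C) ≃ (Q →+ C) := (addMonoidHomLequivInt (A := Q) (B := C) ℤ).symm.toEquiv
  have eq4 : (Q →+ C) ≃ (Multiplicative Q →* ℂˣ) := AddMonoidHom.toMultiplicativeLeft
  have hcard1 : Nat.card {ν : ι → ℂˣ // ∀ i, ∏ j, ν j ^ M i j = 1}
      = Nat.card (Multiplicative Q →* ℂˣ) :=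
    Nat.card_congr (((eq1.trans eq2).trans eq3).trans eq4)
  -- Smith normal form analysis
  obtain ⟨k, snf⟩ := N.smithNormalForm (Pi.basisFun ℤ ι)
  have hNequiv : Nonempty (N ≃ₗ[ℤ] (ι → ℤ)) := ⟨(LinearEquiv.ofInjective L hinj).symm⟩
  have hidx : N.toAddSubgroup.index ≠ 0 :=
    Int.submodule_toAddSubgroup_index_ne_zero_iff.mpr hNequiv
  have hk : k = Fintype.card ι := snf.toAddSubgroup_index_ne_zero_iff.mp hidx
  subst hk
  have hindex_val : N.toAddSubgroup.index = ∏ i : Fin (Fintype.card ι), (snf.a i).natAbs := by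
    rw [snf.toAddSubgroup_index_eq_pow_mul_prod, Nat.sub_self, pow_zero, one_mul]
    exact Finset.prod_congr rfl fun i _ => by
      rw [Ideal.span_singleton_toAddSubgroup_eq_zmultiples, Int.index_zmultiples]
  have hQcard : Nat.card Q = N.toAddSubgroup.index := (AddSubgroup.index_eq_card _).symm
  have hQfin : Finite Q := Nat.finite_of_card_ne_zero (by rw [hQcard]; exact hidx)
  have hexp : NeZero ((Monoid.exponent (Multiplicative Q) : ℂ)) :=
    ⟨Nat.cast_ne_zero.mpr Monoid.exponent_ne_zero_of_finite⟩
  have hdual : Nat.card (Multiplicative Q →* ℂˣ) = Nat.card Q :=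
    Nat.card_congr (CommGroup.monoidHom_mulEquiv_of_hasEnoughRootsOfUnity
      (Multiplicative Q) ℂ).some.toEquiv
  -- determinant computation
  set fequiv : Fin (Fintype.card ι) ≃ ι := Equiv.ofBijective snf.f
    ((Fintype.bijective_iff_injective_and_card snf.f).mpr ⟨snf.f.injective, by simp⟩) with hfequiv
  set eL : (ι → ℤ) ≃ₗ[ℤ] N := LinearEquiv.ofInjective L hinj with heL
  set b : Module.Basis ι ℤ (ι → ℤ) := (snf.bN.reindex fequiv).map eL.symm with hb
  set v : (ι → ℤ) ≃ₗ[ℤ] (ι → ℤ) := snf.bM.equiv b (Equiv.refl ι) with hv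
  have hLv : ∀ i, (L ∘ₗ (v : (ι → ℤ) →ₗ[ℤ] (ι → ℤ))) (snf.bM i)
      = snf.a (fequiv.symm i) • snf.bM i := by
    intro i
    have h1 : v (snf.bM i) = b i := snf.bM.equiv_apply i b (Equiv.refl ι)
    have h2 : L (b i) = (snf.bN.reindex fequiv i : ι → ℤ) := by
      rw [hb]
      simp only [Module.Basis.map_apply]
      have : eL (eL.symm ((snf.bN.reindex fequiv) i)) = (snf.bN.reindex fequiv) i :=
        eL.apply_symm_apply _
      calc L (eL.symm ((snf.bN.reindex fequiv) i))
          = (eL (eL.symm ((snf.bN.reindex fequiv) i)) : ι → ℤ) := by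
            rw [heL]; rfl
        _ = _ := by rw [this]
    have h3 : (snf.bN.reindex fequiv i : ι → ℤ) = snf.a (fequiv.symm i) • snf.bM i := by
      have hfi : snf.f (fequiv.symm i) = i := fequiv.apply_symm_apply i
      rw [Module.Basis.reindex_apply, snf.snf, hfi]
    simp only [LinearMap.comp_apply, LinearEquiv.coe_coe, h1, h2, h3]
  have htm : LinearMap.toMatrix snf.bM snf.bM (L ∘ₗ (v : (ι → ℤ) →ₗ[ℤ] (ι → ℤ)))
      = Matrix.diagonal (fun i => snf.a (fequiv.symm i)) := by
    ext i i'
    rw [LinearMap.toMatrix_apply, hLv, map_smul]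
    rcases eq_or_ne i i' with h | h
    · subst h; simp [Module.Basis.repr_self]
    · simp [Module.Basis.repr_self, Finsupp.single_apply, Matrix.diagonal_apply, h, Ne.symm h]
  have hdetLv : LinearMap.det (L ∘ₗ (v : (ι → ℤ) →ₗ[ℤ] (ι → ℤ)))
      = ∏ i, snf.a (fequiv.symm i) := by
    rw [← LinearMap.det_toMatrix snf.bM, htm, Matrix.det_diagonal]
  have hdetL : LinearMap.det L = M.det := by
    have : L = Matrix.toLin' M.transpose := by
      ext x
      rfl
    rw [this, LinearMap.det_toLin', Matrix.det_transpose]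
  have hunit : IsUnit (LinearMap.det (v : (ι → ℤ) →ₗ[ℤ] (ι → ℤ))) := v.isUnit_det'
  have hfinal : M.det.natAbs = ∏ i : Fin (Fintype.card ι), (snf.a i).natAbs := by
    have h5 : M.det * LinearMap.det (v : (ι → ℤ) →ₗ[ℤ] (ι → ℤ))
        = ∏ i, snf.a (fequiv.symm i) := by
      rw [← hdetL, ← LinearMap.det_comp, hdetLv]
    have h6 : (LinearMap.det (v : (ι → ℤ) →ₗ[ℤ] (ι → ℤ))).natAbs = 1 := by
      rcases Int.isUnit_iff.mp hunit with h | h <;> rw [h] <;> rfl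
    have h7 := congrArg Int.natAbs h5
    rw [Int.natAbs_mul, h6, mul_one] at h7
    rw [h7, ← Equiv.prod_comp fequiv.symm (fun i => (snf.a i).natAbs)]
    exact (map_prod Int.natAbsHom _ _).symm ▸ rfl
  rw [hcard1, hdual, hQcard, hindex_val, hfinal]

/-- If `I` is good for `E` (with row set `A = rowSet E I`, `|A| = |I|`), then the
restriction map `λ ↦ (λ_j)_{j ∈ Iᶜ}` is a group isomorphism from the isotropy subgroup
`G_E^I` onto `{ν ∈ (ℂ*)^{Iᶜ} : ∏_{j ∈ Iᶜ} ν_j ^ E i j = 1 for all i ∈ Aᶜ}`; in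
particular `|G_E^I| = |det E[Aᶜ, Iᶜ]|` (the submatrix being realized by any bijection
`e : Iᶜ ≃ Aᶜ`). -/
theorem restrictTorus_iso_card (E : Matrix (Fin n) (Fin n) ℕ)
    (hdet : (E.map (Nat.cast : ℕ → ℤ)).det ≠ 0)
    (I : Finset (Fin n)) (hgood : (rowSet E I).card = I.card)
    (e : ↥(Iᶜ) ≃ ↥((rowSet E I)ᶜ)) :
    Function.Injective (restrictTorus E I) ∧
    (restrictTorus E I).range = torusSym E I ∧
    Nat.card (isotropy E I) =
      ((E.map (Nat.cast : ℕ → ℤ)).submatrix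
          (fun p : ↥(Iᶜ) => (e p : Fin n)) (fun q : ↥(Iᶜ) => (q : Fin n))).det.natAbs := by
  classical
  have hinj : Function.Injective (restrictTorus E I) := by
    intro l₁ l₂ h
    apply Subtype.ext
    funext j
    by_cases hj : j ∈ I
    · rw [(Subgroup.mem_inf.mp l₁.2).2 j hj, (Subgroup.mem_inf.mp l₂.2).2 j hj]
    · exact congrFun h ⟨j, Finset.mem_compl.mpr hj⟩
  have hrange : (restrictTorus E I).range = torusSym E I := by
    ext ν
    constructor
    · rintro ⟨l, rfl⟩
      have lsym : ∀ i, ∏ j, l.1 j ^ E i j = 1 := (Subgroup.mem_inf.mp l.2).1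
      have lfix : ∀ j ∈ I, l.1 j = 1 := (Subgroup.mem_inf.mp l.2).2
      intro i _
      have hI1 : ∏ j ∈ I, l.1 j ^ E i j = 1 :=
        Finset.prod_eq_one fun j hj => by rw [lfix j hj, one_pow]
      calc ∏ j : ↥(Iᶜ), l.1 ↑j ^ E i ↑j
          = ∏ j ∈ Iᶜ, l.1 j ^ E i j := Finset.prod_coe_sort Iᶜ (fun j => l.1 j ^ E i j)
        _ = (∏ j ∈ I, l.1 j ^ E i j) * ∏ j ∈ Iᶜ, l.1 j ^ E i j := by rw [hI1, one_mul]
        _ = ∏ j, l.1 j ^ E i j := Finset.prod_mul_prod_compl I _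
        _ = 1 := lsym i
    · intro hv
      set l : Fin n → ℂˣ := fun j => if h : j ∈ Iᶜ then ν ⟨j, h⟩ else 1 with hl
      have hlI : ∀ j ∈ I, l j = 1 := fun j hj => by
        rw [hl]
        exact dif_neg (by simpa using hj)
      have hlc : ∀ j : ↥(Iᶜ), l ↑j = ν j := fun j => by
        rw [hl]
        simp only [dif_pos j.2]
      have hsym : ∀ i, ∏ j, l j ^ E i j = 1 := by
        intro i
        have hIpart : ∏ j ∈ I, l j ^ E i j = 1 :=
          Finset.prod_eq_one fun j hj => by rw [hlI j hj, one_pow]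
        rw [← Finset.prod_mul_prod_compl I, hIpart, one_mul]
        by_cases hiA : i ∈ rowSet E I
        · refine Finset.prod_eq_one fun j hj => ?_
          rw [(Finset.mem_filter.mp (show i ∈ Finset.univ.filter (fun i => ∀ j, j ∉ I → E i j = 0) from by unfold rowSet at hiA; convert hiA)).2 j (Finset.mem_compl.mp hj), pow_zero]
        · calc ∏ j ∈ Iᶜ, l j ^ E i j
              = ∏ j : ↥(Iᶜ), l ↑j ^ E i ↑j := (Finset.prod_coe_sort Iᶜ (fun j => l j ^ E i j)).symm
            _ = ∏ j : ↥(Iᶜ), ν j ^ E i ↑j :=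
                Finset.prod_congr rfl fun j _ => by rw [hlc j]
            _ = 1 := hv i (Finset.mem_compl.mpr hiA)
      refine ⟨⟨l, Subgroup.mem_inf.mpr ⟨hsym, hlI⟩⟩, ?_⟩
      funext p
      exact hlc p
  refine ⟨hinj, hrange, ?_⟩
  -- cardinality
  set X := E.map (Nat.cast : ℕ → ℤ) with hX
  set R : Matrix (↥(Iᶜ)) (↥(Iᶜ)) ℤ :=
    X.submatrix (fun p : ↥(Iᶜ) => (e p : Fin n)) (fun q : ↥(Iᶜ) => (q : Fin n)) with hR
  have hiso_tor : Nat.card (isotropy E I) = Nat.card (torusSym E I) := by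
    exact Nat.card_congr ((MonoidHom.ofInjective hinj).toEquiv.trans
      (MulEquiv.subgroupCongr hrange).toEquiv)
  have htor_sub : Nat.card (torusSym E I)
      = Nat.card {ν : ↥(Iᶜ) → ℂˣ // ∀ p, ∏ q, ν q ^ R p q = 1} := by
    refine Nat.card_congr ((Equiv.refl (↥(Iᶜ) → ℂˣ)).subtypeEquiv fun ν => ?_)
    have hRq : ∀ (p q : ↥(Iᶜ)), ν q ^ R p q = ν q ^ E (↑(e p)) (↑q : Fin n) := by
      intro p q
      rw [hR, Matrix.submatrix_apply, hX, Matrix.map_apply, zpow_natCast]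
    constructor
    · intro h p
      calc ∏ q, ν q ^ R p q = ∏ q : ↥(Iᶜ), ν q ^ E (↑(e p)) (↑q : Fin n) :=
            Finset.prod_congr rfl fun q _ => hRq p q
        _ = 1 := h (↑(e p)) (e p).2
    · intro h i hi
      obtain ⟨p, hp⟩ := e.surjective ⟨i, hi⟩
      calc ∏ j : ↥(Iᶜ), ν j ^ E i ↑j
          = ∏ q : ↥(Iᶜ), ν q ^ R p q := Finset.prod_congr rfl fun q _ => by
            rw [hRq p q, hp]
        _ = 1 := h p
  -- the determinant of `R` is nonzero
  have e₀ : ↥I ≃ ↥(rowSet E I) :=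
    Fintype.equivOfCardEq (by simp only [Fintype.card_coe, hgood])
  set γI : (↥I ⊕ ↥(Iᶜ)) ≃ Fin n :=
    (Equiv.sumCongr (Equiv.refl ↥I)
      (Equiv.subtypeEquivRight fun x => Finset.mem_compl)).trans
      (Equiv.sumCompl (· ∈ I)) with hγI
  set γA : (↥(rowSet E I) ⊕ ↥((rowSet E I)ᶜ)) ≃ Fin n :=
    (Equiv.sumCongr (Equiv.refl ↥(rowSet E I))
      (Equiv.subtypeEquivRight fun x => Finset.mem_compl)).trans
      (Equiv.sumCompl (· ∈ rowSet E I)) with hγA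
  set ρ : (↥I ⊕ ↥(Iᶜ)) ≃ Fin n := (Equiv.sumCongr e₀ e).trans γA with hρ
  have hγIl : ∀ x : ↥I, γI (Sum.inl x) = ↑x := fun x => rfl
  have hγIr : ∀ x : ↥(Iᶜ), γI (Sum.inr x) = ↑x := fun x => rfl
  have hρl : ∀ x : ↥I, ρ (Sum.inl x) = ↑(e₀ x) := fun x => rfl
  have hρr : ∀ x : ↥(Iᶜ), ρ (Sum.inr x) = ↑(e x) := fun x => rfl
  set B := X.submatrix ρ γI with hB
  have hB22 : B.toBlocks₂₂ = R := by
    ext p q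
    rw [Matrix.toBlocks₂₂]
    simp only [Matrix.of_apply, hB, Matrix.submatrix_apply, hρr, hγIr, hR]
  have hB12 : B.toBlocks₁₂ = 0 := by
    ext x y
    rw [Matrix.toBlocks₁₂]
    simp only [Matrix.of_apply, hB, Matrix.submatrix_apply, hρl, hγIr, hX,
      Matrix.map_apply, Matrix.zero_apply]
    have h0 : E (↑(e₀ x)) (↑y) = 0 :=
      (Finset.mem_filter.mp (show ↑(e₀ x) ∈ Finset.univ.filter (fun i => ∀ j, j ∉ I → E i j = 0) from by obtain ⟨i0, hi0⟩ := e₀ x; have hx : i0 ∈ rowSet E I := hi0; unfold rowSet at hx; convert hx)).2 ↑y (Finset.mem_compl.mp y.2)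
    rw [h0]
    rfl
  have hBblocks : B = Matrix.fromBlocks B.toBlocks₁₁ 0 B.toBlocks₂₁ B.toBlocks₂₂ := by
    rw [← hB12, Matrix.fromBlocks_toBlocks]
  have hBdet : B.det = B.toBlocks₁₁.det * B.toBlocks₂₂.det := by
    conv_lhs => rw [hBblocks]
    rw [Matrix.det_fromBlocks_zero₁₂]
  have hBdet_ne : B.det ≠ 0 := by
    have hcomp : B = (X.submatrix γI γI).submatrix (⇑(ρ.trans γI.symm)) id := by
      ext i j
      simp [hB, Matrix.submatrix_apply]
    rw [hcomp, Matrix.det_permute, Matrix.det_submatrix_equiv_self]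
    exact mul_ne_zero (by exact_mod_cast (Equiv.Perm.sign (ρ.trans γI.symm)).ne_zero) hdet
  have hRdet_ne : R.det ≠ 0 := by
    intro h
    apply hBdet_ne
    rw [hBdet, hB22, h, mul_zero]
  rw [hiso_tor, htor_sub, card_charKer R hRdet_ne]
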